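/- arXiv:1003.0443 — 4 statements merged into one kernel-verified Lean document; each statement's English description precedes it below -/
import Mathlib

section
/- Let 0 < ε < 1, τ = (1−√ε)/(1+√ε), and let μ ∈ ℂ satisfy √ε·|μ| ≤ 1/2. Then the series ∑_{k=0}^∞ log(1−√ε μ τ^k) converges absolutely and |∑_{k=0}^∞ [log(1−√ε μ τ^k) + √ε μ τ^k]| ≤ ε|μ|²/(1−τ²). -/
/-!
Put `w_k = √ε μ τ^k`. Since `|τ| < 1` we have `‖w_k‖ ≤ √ε ‖μ‖ ≤ 1/2`, and on the disc
`‖w‖ ≤ 1/2` the Taylor remainder of `log (1 - w)` gives `‖log (1 - w)‖ ≤ 3/2 ‖w‖` and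
`‖log (1 - w) + w‖ ≤ ‖w‖²`. Both bounds are geometric in `k`, with ratios `|τ|` and `τ²`.
-/

open Complex

namespace Complex

lemma norm_log_one_sub_le {w : ℂ} (hw : ‖w‖ ≤ 1 / 2) : ‖log (1 - w)‖ ≤ 3 / 2 * ‖w‖ := by
  simpa [sub_eq_add_neg] using norm_log_one_add_half_le_self (z := -w) (by simpa using hw)

lemma norm_log_one_sub_add_self_le_sq {w : ℂ} (hw : ‖w‖ ≤ 1 / 2) :
    ‖log (1 - w) + w‖ ≤ ‖w‖ ^ 2 := by
  have hlt : ‖-w‖ < 1 := by rw [norm_neg]; linarith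
  have hinv : (1 - ‖w‖)⁻¹ ≤ 2 := by
    rw [inv_le_comm₀ (by linarith) two_pos]; linarith
  calc ‖log (1 - w) + w‖ = ‖log (1 + -w) - -w‖ := by rw [sub_neg_eq_add, ← sub_eq_add_neg]
    _ ≤ ‖w‖ ^ 2 * (1 - ‖w‖)⁻¹ / 2 := by simpa using norm_log_one_add_sub_self_le hlt
    _ ≤ ‖w‖ ^ 2 * 2 / 2 := by gcongr
    _ = ‖w‖ ^ 2 := by ring

end Complex

section GeometricLogSum

variable {c q : ℂ}

lemma norm_mul_pow_le_of_norm_le_one (hq : ‖q‖ ≤ 1) (k : ℕ) :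
    ‖c * q ^ k‖ ≤ ‖c‖ := by
  rw [norm_mul, norm_pow]
  exact mul_le_of_le_one_right (norm_nonneg c) (pow_le_one₀ (norm_nonneg q) hq)

lemma summable_norm_log_one_sub_mul_pow (hc : ‖c‖ ≤ 1 / 2) (hq : ‖q‖ < 1) :
    Summable fun k : ℕ => ‖log (1 - c * q ^ k)‖ := by
  refine .of_nonneg_of_le (fun _ => norm_nonneg _) (fun k => ?_)
    ((summable_geometric_of_lt_one (norm_nonneg q) hq).mul_left (3 / 2 * ‖c‖))
  calc ‖log (1 - c * q ^ k)‖ ≤ 3 / 2 * ‖c * q ^ k‖ :=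
        norm_log_one_sub_le ((norm_mul_pow_le_of_norm_le_one hq.le k).trans hc)
    _ = 3 / 2 * ‖c‖ * ‖q‖ ^ k := by rw [norm_mul, norm_pow, mul_assoc]

lemma norm_tsum_log_one_sub_mul_pow_add_le (hc : ‖c‖ ≤ 1 / 2) (hq : ‖q‖ < 1) :
    ‖∑' k : ℕ, (log (1 - c * q ^ k) + c * q ^ k)‖ ≤ ‖c‖ ^ 2 / (1 - ‖q‖ ^ 2) := by
  have hq2 : ‖q‖ ^ 2 < 1 := pow_lt_one₀ (norm_nonneg q) hq two_ne_zero
  have hbound : ∀ k : ℕ, ‖log (1 - c * q ^ k) + c * q ^ k‖ ≤ ‖c‖ ^ 2 * (‖q‖ ^ 2) ^ k := by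
    intro k
    refine (norm_log_one_sub_add_self_le_sq
      ((norm_mul_pow_le_of_norm_le_one hq.le k).trans hc)).trans_eq ?_
    rw [norm_mul, norm_pow, mul_pow, ← pow_mul, ← pow_mul, mul_comm k]
  have hgeom : HasSum (fun k : ℕ => ‖c‖ ^ 2 * (‖q‖ ^ 2) ^ k) (‖c‖ ^ 2 / (1 - ‖q‖ ^ 2)) := by
    simpa [div_eq_mul_inv] using
      (hasSum_geometric_of_lt_one (by positivity) hq2).mul_left (‖c‖ ^ 2)
  exact tsum_of_norm_bounded hgeom hbound

end GeometricLogSum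

theorem prefactor_log_sum_bound_general (ε : ℝ) (h0 : 0 < ε) (μ : ℂ)
    (hμ : Real.sqrt ε * ‖μ‖ ≤ 1/2) :
    (Summable fun k : ℕ =>
      ‖Complex.log (1 - (Real.sqrt ε : ℂ) * μ *
          (((1 - Real.sqrt ε) / (1 + Real.sqrt ε) : ℝ) : ℂ) ^ k)‖) ∧
    ‖∑' k : ℕ,
        (Complex.log (1 - (Real.sqrt ε : ℂ) * μ *
            (((1 - Real.sqrt ε) / (1 + Real.sqrt ε) : ℝ) : ℂ) ^ k)
          + (Real.sqrt ε : ℂ) * μ *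
            (((1 - Real.sqrt ε) / (1 + Real.sqrt ε) : ℝ) : ℂ) ^ k)‖
      ≤ ε * ‖μ‖ ^ 2 / (1 - ((1 - Real.sqrt ε) / (1 + Real.sqrt ε)) ^ 2) := by
  have hs : 0 < Real.sqrt ε := Real.sqrt_pos.mpr h0
  have hc : ‖(Real.sqrt ε : ℂ) * μ‖ = Real.sqrt ε * ‖μ‖ := by
    rw [norm_mul, Complex.norm_real, Real.norm_of_nonneg hs.le]
  have hτ : ‖(((1 - Real.sqrt ε) / (1 + Real.sqrt ε) : ℝ) : ℂ)‖ < 1 := by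
    rw [Complex.norm_real, Real.norm_eq_abs, abs_div, abs_of_pos (by linarith : 0 < 1 + Real.sqrt ε),
      div_lt_one (by linarith), abs_sub_lt_iff]
    constructor <;> linarith
  refine ⟨summable_norm_log_one_sub_mul_pow (hc ▸ hμ) hτ, ?_⟩
  refine (norm_tsum_log_one_sub_mul_pow_add_le (hc ▸ hμ) hτ).trans_eq ?_
  rw [hc, Complex.norm_real, Real.norm_eq_abs, sq_abs, mul_pow, Real.sq_sqrt h0.le]

theorem prefactor_log_sum_bound (ε : ℝ) (h0 : 0 < ε) (h1 : ε < 1) (μ : ℂ)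
    (hμ : Real.sqrt ε * ‖μ‖ ≤ 1/2) :
    (Summable fun k : ℕ =>
      ‖Complex.log (1 - (Real.sqrt ε : ℂ) * μ *
          (((1 - Real.sqrt ε) / (1 + Real.sqrt ε) : ℝ) : ℂ) ^ k)‖) ∧
    ‖∑' k : ℕ,
        (Complex.log (1 - (Real.sqrt ε : ℂ) * μ *
            (((1 - Real.sqrt ε) / (1 + Real.sqrt ε) : ℝ) : ℂ) ^ k)
          + (Real.sqrt ε : ℂ) * μ *
            (((1 - Real.sqrt ε) / (1 + Real.sqrt ε) : ℝ) : ℂ) ^ k)‖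
      ≤ ε * ‖μ‖ ^ 2 / (1 - ((1 - Real.sqrt ε) / (1 + Real.sqrt ε)) ^ 2) :=
  prefactor_log_sum_bound_general ε h0 μ hμ
end

section
/- Let a ∈ ℂ with |a| < 1 and let w ∈ ℂ with Re(w) > 0. Then ∑_{k=0}^∞ a^k/(w+k) = ∫_0^∞ e^{−(w−1)t}/(e^t − a) dt, where the integral converges absolutely. -/
/-!
For `t > 0` the integrand expands as a geometric series,
`e^{-(w-1)t} / (e^t - a) = ∑ₖ aᵏ e^{-(w+k)t}`, and `∫₀^∞ e^{-(w+k)t} dt = 1/(w+k)`.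
Termwise integration is justified since `∑ₖ ‖a‖ᵏ / (Re w + k) < ∞`; absolute convergence of
the integral follows from `‖e^t - a‖ ≥ (1 - ‖a‖) e^t`.
-/

open MeasureTheory Set Complex

lemma norm_cexp_neg_mul_ofReal (c : ℂ) (t : ℝ) :
    ‖cexp (-c * t)‖ = Real.exp (-c.re * t) := by
  simp [Complex.norm_exp]

lemma integrableOn_cexp_neg_mul_Ioi {c : ℂ} (hc : 0 < c.re) (x : ℝ) :
    IntegrableOn (fun t : ℝ => cexp (-c * t)) (Ioi x) :=
  integrableOn_exp_mul_complex_Ioi (by simpa using hc) x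

lemma integral_cexp_neg_mul_Ioi_zero {c : ℂ} (hc : 0 < c.re) :
    ∫ t in Ioi (0 : ℝ), cexp (-c * t) = c⁻¹ := by
  rw [integral_exp_mul_complex_Ioi (by simpa using hc)]
  simp [neg_div]

lemma integral_norm_cexp_neg_mul_Ioi_zero {c : ℂ} (hc : 0 < c.re) :
    ∫ t in Ioi (0 : ℝ), ‖cexp (-c * t)‖ = c.re⁻¹ := by
  simp_rw [norm_cexp_neg_mul_ofReal]
  rw [integral_exp_mul_Ioi (by simpa using hc)]
  simp [neg_div]

lemma hasSum_pow_mul_cexp_neg_add_mul {a : ℂ} (ha : ‖a‖ < 1) (w : ℂ) {t : ℝ} (ht : 0 ≤ t) :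
    HasSum (fun k : ℕ => a ^ k * cexp (-(w + k) * t))
      (cexp (-(w - 1) * t) / (cexp t - a)) := by
  have hq : ‖a * cexp (-t)‖ < 1 := by
    rw [norm_mul, ← ofReal_neg, norm_exp_ofReal]
    exact (mul_le_of_le_one_right (norm_nonneg a) (Real.exp_le_one_iff.2 (by linarith))).trans_lt ha
  have hterm (k : ℕ) : a ^ k * cexp (-(w + k) * t) = cexp (-w * t) * (a * cexp (-t)) ^ k := by
    rw [mul_pow, ← Complex.exp_nat_mul, mul_left_comm, ← Complex.exp_add]
    ring_nf
  have hsum :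
      cexp (-w * t) * (1 - a * cexp (-t))⁻¹ = cexp (-(w - 1) * t) / (cexp t - a) := by
    have hden : cexp t - a = (1 - a * cexp (-t)) * cexp t := by
      rw [sub_mul, one_mul, mul_assoc, ← Complex.exp_add, neg_add_cancel, Complex.exp_zero,
        mul_one]
    rw [hden, show -(w - 1) * t = -w * t + t by ring, Complex.exp_add,
      mul_div_mul_right _ _ (Complex.exp_ne_zero _), div_eq_mul_inv]
  simpa only [hterm, hsum] using (hasSum_geometric_of_norm_lt_one hq).mul_left (cexp (-w * t))

lemma one_sub_norm_mul_exp_le_norm_cexp_sub (a : ℂ) {t : ℝ} (ht : 0 ≤ t) :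
    (1 - ‖a‖) * Real.exp t ≤ ‖cexp t - a‖ :=
  calc (1 - ‖a‖) * Real.exp t = ‖cexp t‖ - ‖a‖ * Real.exp t := by rw [norm_exp_ofReal]; ring
    _ ≤ ‖cexp t‖ - ‖a‖ := by
      gcongr
      exact le_mul_of_one_le_right (norm_nonneg a) (Real.one_le_exp ht)
    _ ≤ ‖cexp t - a‖ := norm_sub_norm_le _ _

lemma integrableOn_cexp_neg_sub_one_mul_div_cexp_sub {a : ℂ} (ha : ‖a‖ < 1) {w : ℂ}
    (hw : 0 < w.re) :
    IntegrableOn (fun t : ℝ => cexp (-(w - 1) * t) / (cexp t - a)) (Ioi 0) := by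
  have hden_pos {t : ℝ} (ht : 0 ≤ t) : 0 < ‖cexp t - a‖ :=
    (mul_pos (sub_pos.2 ha) (Real.exp_pos t)).trans_le
      (one_sub_norm_mul_exp_le_norm_cexp_sub a ht)
  refine Integrable.mono' ((exp_neg_integrableOn_Ioi 0 hw).const_mul (1 - ‖a‖)⁻¹) ?_ ?_
  · exact ContinuousOn.aestronglyMeasurable (ContinuousOn.div (by fun_prop) (by fun_prop)
      fun t ht => norm_pos_iff.1 (hden_pos (le_of_lt ht))) measurableSet_Ioi
  · refine (ae_restrict_iff' measurableSet_Ioi).2 (Filter.Eventually.of_forall fun t ht => ?_)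
    have ht : 0 ≤ t := le_of_lt ht
    calc ‖cexp (-(w - 1) * t) / (cexp t - a)‖
        = Real.exp (-w.re * t) * Real.exp t / ‖cexp t - a‖ := by
          rw [norm_div, norm_cexp_neg_mul_ofReal, ← Real.exp_add]; congr 2; simp; ring
      _ ≤ Real.exp (-w.re * t) * Real.exp t / ((1 - ‖a‖) * Real.exp t) := by
          gcongr
          exact one_sub_norm_mul_exp_le_norm_cexp_sub a ht
      _ = (1 - ‖a‖)⁻¹ * Real.exp (-w.re * t) := by
          field_simp [(Real.exp_pos t).ne', (sub_pos.2 ha).ne']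

lemma add_natCast_re_pos {w : ℂ} (hw : 0 < w.re) (k : ℕ) : 0 < (w + k).re := by
  simp only [add_re, natCast_re]
  positivity

lemma summable_integral_norm_pow_mul_cexp_neg_add_mul {a : ℂ} (ha : ‖a‖ < 1) {w : ℂ}
    (hw : 0 < w.re) :
    Summable fun k : ℕ => ∫ t in Ioi (0 : ℝ), ‖a ^ k * cexp (-(w + k) * t)‖ := by
  have hre := add_natCast_re_pos hw
  simp_rw [norm_mul, integral_const_mul, integral_norm_cexp_neg_mul_Ioi_zero (hre _), norm_pow]
  refine ((summable_geometric_of_lt_one (norm_nonneg a) ha).mul_right w.re⁻¹).of_nonneg_of_le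
    (fun k => mul_nonneg (by positivity) (inv_nonneg.2 (hre k).le)) fun k => ?_
  gcongr ‖a‖ ^ k * ?_
  exact inv_anti₀ hw (by simp)

theorem lerch_integral_representation (a : ℂ) (ha : ‖a‖ < 1) (w : ℂ) (hw : 0 < w.re) :
    MeasureTheory.IntegrableOn
      (fun t : ℝ => Complex.exp (-(w - 1) * t) / (Complex.exp t - a)) (Set.Ioi 0) ∧
    ∑' k : ℕ, a ^ k / (w + k)
      = ∫ t in Set.Ioi (0:ℝ), Complex.exp (-(w - 1) * t) / (Complex.exp t - a) := by
  refine ⟨integrableOn_cexp_neg_sub_one_mul_div_cexp_sub ha hw, ?_⟩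
  have hre := add_natCast_re_pos hw
  calc ∑' k : ℕ, a ^ k / (w + k)
      = ∑' k : ℕ, ∫ t in Ioi (0 : ℝ), a ^ k * cexp (-(w + k) * t) := tsum_congr fun k => by
        rw [integral_const_mul, integral_cexp_neg_mul_Ioi_zero (hre k), div_eq_mul_inv]
    _ = ∫ t in Ioi (0 : ℝ), ∑' k : ℕ, a ^ k * cexp (-(w + k) * t) :=
        integral_tsum_of_summable_integral_norm
          (fun k => (integrableOn_cexp_neg_mul_Ioi (hre k) 0).const_mul _)
          (summable_integral_norm_pow_mul_cexp_neg_add_mul ha hw)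
    _ = ∫ t in Ioi (0 : ℝ), cexp (-(w - 1) * t) / (cexp t - a) :=
        setIntegral_congr_fun measurableSet_Ioi fun t ht =>
          (hasSum_pow_mul_cexp_neg_add_mul ha w (le_of_lt ht)).tsum_eq
end

section
/- Let p(t,x) = e^{−x²/(2t)}/√(2πt). Then for all T > 0 and X ∈ ℝ, ∫_0^T ∫_ℝ p(T−S, X−Y)² p(S,Y)² dY dS = (√(πT)/2) · p(T,X)². -/
noncomputable def heatKernel (t x : ℝ) : ℝ :=
  Real.exp (-x ^ 2 / (2 * t)) / Real.sqrt (2 * Real.pi * t)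

/-!
Squaring a heat kernel halves its time and costs a factor `1 / (2 √(π t))`:
`p(t, x)² = p(t/2, x) / (2 √(π t))`. After this, the inner integral is a Chapman–Kolmogorov
convolution `∫ p((T-S)/2, X-Y) p(S/2, Y) dY = p(T/2, X)`, so it equals
`p(T/2, X) / (4π √(S(T-S)))`, and the outer integral is the arcsine integral
`∫₀ᵀ dS / √(S(T-S)) = B(1/2, 1/2) = π`.
-/

open MeasureTheory Real Set

lemma heatKernel_sq {t : ℝ} (ht : 0 < t) (x : ℝ) :
    heatKernel t x ^ 2 = heatKernel (t / 2) x / (2 * √(π * t)) := by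
  unfold heatKernel
  rw [div_pow, sq_sqrt (by positivity), ← exp_nat_mul, div_div]
  congr 1
  · congr 1
    push_cast
    field_simp
  · rw [show 2 * π * (t / 2) = π * t by ring]
    linear_combination (-2) * mul_self_sqrt (by positivity : 0 ≤ π * t)

lemma integral_heatKernel_sub_mul_heatKernel {s t : ℝ} (hs : 0 < s) (ht : 0 < t) (x : ℝ) :
    ∫ y, heatKernel s (x - y) * heatKernel t y = heatKernel (s + t) x := by
  set a := (s + t) / (2 * s * t) with ha_def
  set m := t * x / (s + t) with hm_def
  have ha : 0 < a := by positivity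
  -- completing the square in `y`
  have hsquare : ∀ y, heatKernel s (x - y) * heatKernel t y
      = heatKernel (s + t) x / √(π / a) * exp (-a * (y - m) ^ 2) := by
    intro y
    unfold heatKernel
    rw [div_mul_div_comm, ← exp_add, div_div, div_mul_eq_mul_div, ← exp_add]
    congr 1
    · rw [ha_def, hm_def]
      congr 1
      field_simp
      ring
    · rw [← sqrt_mul (by positivity), ← sqrt_mul (by positivity)]
      congr 1
      rw [ha_def]
      field_simp
  have hgauss : ∫ y, exp (-a * (y - m) ^ 2) = √(π / a) :=
    (integral_sub_right_eq_self (fun y ↦ exp (-a * y ^ 2)) m).trans (integral_gaussian a)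
  simp_rw [hsquare]
  rw [integral_const_mul, hgauss, div_mul_cancel₀]
  positivity

lemma integral_inv_sqrt_mul_one_sub : ∫ x in (0 : ℝ)..1, (√(x * (1 - x)))⁻¹ = π := by
  have hbeta : Complex.betaIntegral (1 / 2) (1 / 2) = π := by
    have hGamma := Complex.Gamma_mul_Gamma_eq_betaIntegral (s := 1 / 2) (t := 1 / 2)
      (by norm_num) (by norm_num)
    rw [show (1 / 2 + 1 / 2 : ℂ) = 1 by norm_num, Complex.Gamma_one, one_mul] at hGamma
    rw [← hGamma, show (1 / 2 : ℂ) = ((1 / 2 : ℝ) : ℂ) by norm_num, Complex.Gamma_ofReal,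
      Gamma_one_half_eq, ← Complex.ofReal_mul, mul_self_sqrt pi_nonneg]
  have hintegrand :
      EqOn (fun x : ℝ ↦ (x : ℂ) ^ ((1 / 2 : ℂ) - 1) * (1 - (x : ℂ)) ^ ((1 / 2 : ℂ) - 1))
        (fun x ↦ (((√(x * (1 - x)))⁻¹ : ℝ) : ℂ)) (uIcc 0 1) := by
    intro x hx
    dsimp only
    rw [uIcc_of_le zero_le_one] at hx
    have hx0 : 0 ≤ x := hx.1
    have hx1 : 0 ≤ 1 - x := sub_nonneg.2 hx.2
    rw [show (1 / 2 : ℂ) - 1 = ((-(1 / 2) : ℝ) : ℂ) by norm_num,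
      show 1 - (x : ℂ) = ((1 - x : ℝ) : ℂ) by push_cast; ring,
      ← Complex.ofReal_cpow hx0, ← Complex.ofReal_cpow hx1, ← Complex.ofReal_mul,
      rpow_neg hx0, rpow_neg hx1, ← mul_inv, sqrt_mul hx0, sqrt_eq_rpow, sqrt_eq_rpow]
  rw [Complex.betaIntegral, intervalIntegral.integral_congr hintegrand,
    intervalIntegral.integral_ofReal] at hbeta
  exact_mod_cast hbeta

lemma integral_Ioo_inv_sqrt_mul_sub {T : ℝ} (hT : 0 < T) :
    ∫ S in Ioo 0 T, (√(S * (T - S)))⁻¹ = π := by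
  rw [← integral_Ioc_eq_integral_Ioo, ← intervalIntegral.integral_of_le hT.le]
  have hscale : ∀ x, (√(T * x * (T - T * x)))⁻¹ = T⁻¹ * (√(x * (1 - x)))⁻¹ := by
    intro x
    rw [show T * x * (T - T * x) = T ^ 2 * (x * (1 - x)) by ring,
      sqrt_mul (sq_nonneg T), sqrt_sq hT.le, mul_inv]
  calc ∫ S in 0..T, (√(S * (T - S)))⁻¹
      = T * ∫ x in 0..1, (√(T * x * (T - T * x)))⁻¹ := by
        simpa using (intervalIntegral.smul_integral_comp_mul_left
          (fun S ↦ (√(S * (T - S)))⁻¹) T (a := 0) (b := 1)).symm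
    _ = π := by
        simp_rw [hscale]
        rw [intervalIntegral.integral_const_mul, integral_inv_sqrt_mul_one_sub,
          mul_inv_cancel_left₀ hT.ne']

lemma integral_heatKernel_sq_mul_heatKernel_sq {S T : ℝ} (hS : 0 < S) (hST : S < T) (X : ℝ) :
    ∫ Y, heatKernel (T - S) (X - Y) ^ 2 * heatKernel S Y ^ 2
      = heatKernel (T / 2) X / (4 * π) * (√(S * (T - S)))⁻¹ := by
  have hTS : 0 < T - S := sub_pos.2 hST
  have hconv : ∫ Y, heatKernel ((T - S) / 2) (X - Y) * heatKernel (S / 2) Y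
      = heatKernel (T / 2) X := by
    rw [integral_heatKernel_sub_mul_heatKernel (by positivity) (by positivity)]
    ring_nf
  have hnorm : 2 * √(π * (T - S)) * (2 * √(π * S)) = 4 * π * √(S * (T - S)) := by
    rw [mul_mul_mul_comm, ← sqrt_mul (by positivity),
      show π * (T - S) * (π * S) = π ^ 2 * (S * (T - S)) by ring,
      sqrt_mul (sq_nonneg π), sqrt_sq pi_pos.le]
    ring
  simp_rw [heatKernel_sq hTS, heatKernel_sq hS, div_mul_div_comm]
  rw [integral_div, hconv, hnorm, div_mul_eq_div_div, div_eq_mul_inv]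

theorem heatKernel_sq_convolution (T X : ℝ) (hT : 0 < T) :
    ∫ S in Set.Ioo (0:ℝ) T, ∫ Y : ℝ, (heatKernel (T - S) (X - Y)) ^ 2 * (heatKernel S Y) ^ 2
      = (Real.sqrt (Real.pi * T) / 2) * (heatKernel T X) ^ 2 := by
  rw [setIntegral_congr_fun measurableSet_Ioo
      fun S hS ↦ integral_heatKernel_sq_mul_heatKernel_sq hS.1 hS.2 X,
    integral_const_mul, integral_Ioo_inv_sqrt_mul_sub hT, heatKernel_sq hT X]
  have : √(π * T) ≠ 0 := by positivity
  field_simp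
  ring
end

section
/- Let 0 < p < 1, q = 1 − p, λ = (1/2)·log(q/p), ν = 1 − 2√(pq), and D = 2√(pq). Then for all a, b ∈ {−1, 1}: (D/2)·(e^{−λb} − 2 + e^{λa}) = ν + (e^{−2λ} − 1)·q·(1−a)(1+b)/4 + (e^{2λ} − 1)·p·(1+a)(1−b)/4. -/
/-!
Since `e^λ = √(q/p)`, the weights `√(pq) e^{λ}` and `√(pq) e^{-λ}` are exactly `q` and `p`, and
`e^{±2λ} - 1` are `(q - p)/p` and `(p - q)/q`. For `a = ±1` this makes `√(pq) e^{λa}` the affine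
interpolation `((1 + a) q + (1 - a) p)/2`, after which both sides are affine in `a` and `b` and
agree because `p + q = 1`.
-/

open Real

lemma sqrt_mul_mul_exp_half_log_div {p q : ℝ} (hp : 0 < p) (hq : 0 < q) :
    √(p * q) * exp ((1 / 2) * log (q / p)) = q := by
  rw [one_div_mul_eq_div, exp_half, exp_log (div_pos hq hp), ← sqrt_mul (by positivity),
    show p * q * (q / p) = q * q by field_simp, sqrt_mul_self hq.le]

lemma sqrt_mul_mul_exp_half_log_div_mul_sign {p q a : ℝ} (hp : 0 < p) (hq : 0 < q)
    (ha : a = -1 ∨ a = 1) :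
    √(p * q) * exp ((1 / 2) * log (q / p) * a) = ((1 + a) * q + (1 - a) * p) / 2 := by
  rcases ha with rfl | rfl
  · rw [mul_neg_one, ← mul_neg, ← log_inv, inv_div, mul_comm p q,
      sqrt_mul_mul_exp_half_log_div hq hp]
    ring
  · rw [mul_one, sqrt_mul_mul_exp_half_log_div hp hq]
    ring

theorem microscopic_hopf_cole_identity (p : ℝ) (hp : 0 < p) (hp1 : p < 1)
    (q lam ν D : ℝ) (hq : q = 1 - p) (hlam : lam = (1/2) * Real.log (q / p))
    (hν : ν = 1 - 2 * Real.sqrt (p * q)) (hD : D = 2 * Real.sqrt (p * q))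
    (a b : ℝ) (ha : a = -1 ∨ a = 1) (hb : b = -1 ∨ b = 1) :
    (D / 2) * (Real.exp (-lam * b) - 2 + Real.exp (lam * a))
      = ν + (Real.exp (-2 * lam) - 1) * q * (1 - a) * (1 + b) / 4
          + (Real.exp (2 * lam) - 1) * p * (1 + a) * (1 - b) / 4 := by
  have hq0 : 0 < q := by linarith
  have hb' : -b = -1 ∨ -b = 1 := by rcases hb with rfl | rfl <;> norm_num
  have h2lam : exp (2 * lam) = q / p := by
    rw [hlam, ← mul_assoc, mul_one_div_cancel two_ne_zero, one_mul, exp_log (div_pos hq0 hp)]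
  have hm2lam : exp (-2 * lam) = p / q := by
    rw [neg_mul, exp_neg, h2lam, inv_div]
  have hA : D / 2 * exp (lam * a) = ((1 + a) * q + (1 - a) * p) / 2 := by
    rw [hD, hlam, mul_div_cancel_left₀ _ two_ne_zero,
      sqrt_mul_mul_exp_half_log_div_mul_sign hp hq0 ha]
  have hB : D / 2 * exp (-lam * b) = ((1 - b) * q + (1 + b) * p) / 2 := by
    rw [neg_mul, ← mul_neg, hD, hlam, mul_div_cancel_left₀ _ two_ne_zero,
      sqrt_mul_mul_exp_half_log_div_mul_sign hp hq0 hb']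
    ring
  rw [mul_add, mul_sub, hA, hB, h2lam, hm2lam, hν, hD]
  subst hq
  field_simp
  ring
end
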